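/- Let S ⊆ M_N(W) be a ∂_q-invariant subalgebra with p·S ⊆ S, where W is the first Weyl algebra over an algebraically closed field k of characteristic zero. If S acts irreducibly on V_N = (k[p])^N, then S is dense in M_N(W) with respect to the q-topology: for every element x ∈ M_N(W) and every n ≥ 0 there exists s ∈ S with x - s ∈ M_N(W)·q^n. -/

import Mathlib

/-!
Let `T` be the image of `S` in `End_k(V)`, `V = k[X]^N`. Since `T` moves any nonzero vector to
any other and `p • S ⊆ S`, an endomorphism `φ` commuting with `T` also commutes with
multiplication by `X`, so it is a `k[X]`-linear endomorphism of `k[X]^N`. If `μ` is an eigenvalue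
of its matrix at `X = 0`, then `φ - μ` is not invertible, and Schur's lemma forces `φ = μ`. With a
scalar commutant, Jacobson density provides `s ∈ S` agreeing with `x` on the vectors `X^m e_j`
(`m < n`); an element of `W` killing `1, X, …, X^(n-1)` is a right multiple of `q^n`.
-/

open Polynomial

set_option synthInstance.maxHeartbeats 1000000
set_option maxHeartbeats 1000000

noncomputable section

variable (k : Type*) [Field k] [CharZero k]

/-- The operator `p`: multiplication by `X` on `k[X]`. -/
def pOp : Module.End k (Polynomial k) := LinearMap.mulLeft k (X : Polynomial k)

/-- The operator `q = d/dX` on `k[X]`. -/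
def qOp : Module.End k (Polynomial k) := derivative

/-- The (first) Weyl algebra, realized concretely as the subalgebra of
`End_k(k[X])` generated by multiplication by `X` and `d/dX`.  (In characteristic
zero this is a faithful model of `k⟨p,q | qp - pq = 1⟩`.) -/
def WeylA : Subalgebra k (Module.End k (Polynomial k)) :=
  Algebra.adjoin k {pOp k, qOp k}

/-- The element `p` of the Weyl algebra. -/
def pW : WeylA k := ⟨pOp k, Algebra.subset_adjoin (Set.mem_insert _ _)⟩

/-- The element `q` of the Weyl algebra. -/
def qW : WeylA k := ⟨qOp k, Algebra.subset_adjoin (Set.mem_insert_of_mem _ rfl)⟩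

variable (N : ℕ)

/-- `M_N(W)`, the `N×N` matrices over the Weyl algebra. -/
abbrev MW := Matrix (Fin N) (Fin N) (WeylA k)

/-- The scalar matrix `p·Id_N`. -/
def pM : MW k N := Matrix.diagonal fun _ => pW k

/-- The scalar matrix `q·Id_N`. -/
def qM : MW k N := Matrix.diagonal fun _ => qW k

/-- The derivation `∂_q(a) = [a,p]` on `M_N(W)`. -/
def dq (a : MW k N) : MW k N := a * pM k N - pM k N * a

/-- Evaluation of a polynomial at `p`, i.e. the embedding `k[p] → W`. -/
def polyP : Polynomial k →ₐ[k] WeylA k := Polynomial.aeval (pW k)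

/-- Evaluation of a polynomial at `q`, i.e. the embedding `k[q] → W`. -/
def polyQ : Polynomial k →ₐ[k] WeylA k := Polynomial.aeval (qW k)


/-- The canonical action of `M_N(W)` on `V_N = (k[p])^N`. -/
def act (N : ℕ) (a : MW k N) (v : Fin N → Polynomial k) : Fin N → Polynomial k :=
  fun i => ∑ j, (a i j : Module.End k (Polynomial k)) (v j)

namespace WeylDensity

section Irreducible

variable {K V : Type*} [Field K] [AddCommGroup V] [Module K V]

theorem exists_linearMap_apply_eq {V' ι : Type*} [AddCommGroup V'] [Module K V'] {v : ι → V}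
    (hv : LinearIndependent K v) (w : ι → V') : ∃ g : V →ₗ[K] V', ∀ i, g (v i) = w i := by
  obtain ⟨g, hg⟩ := LinearMap.exists_extend ((Finsupp.linearCombination K w).comp hv.repr)
  refine ⟨g, fun i => ?_⟩
  simpa [hv.repr_eq_single i] using LinearMap.congr_fun hg ⟨v i, Submodule.subset_span ⟨i, rfl⟩⟩

theorem mul_mem_of_mem_adjoin {R A : Type*} [CommSemiring R] [Semiring A] [Algebra R A]
    {T : NonUnitalSubalgebra R A} {a : A} (ha : a ∈ Algebra.adjoin R (T : Set A)) {t : A}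
    (ht : t ∈ T) : t * a ∈ T := by
  induction ha using Algebra.adjoin_induction generalizing t with
  | mem x hx => exact mul_mem ht hx
  | algebraMap r => simpa [← Algebra.commutes, ← Algebra.smul_def] using SMulMemClass.smul_mem r ht
  | add x y _ _ hx hy => simpa only [mul_add] using add_mem (hx ht) (hy ht)
  | mul x y _ _ hx hy => simpa only [mul_assoc] using hy (hx ht)

def ActsIrreducibly (T : NonUnitalSubalgebra K (Module.End K V)) : Prop :=
  ∀ U : Submodule K V, (∀ t ∈ T, ∀ u ∈ U, t u ∈ U) → U = ⊥ ∨ U = ⊤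

namespace ActsIrreducibly

variable {T : NonUnitalSubalgebra K (Module.End K V)} (hT : ActsIrreducibly T)
include hT

theorem exists_ne_zero {U : Submodule K V} (hU₀ : U ≠ ⊥) (hU₁ : U ≠ ⊤) : ∃ t ∈ T, t ≠ 0 := by
  by_contra! h
  exact (hT U fun t ht u _ => by simp [h t ht]).elim hU₀ hU₁

theorem eq_zero_or_bijective {φ : Module.End K V} (hφ : ∀ t ∈ T, ∀ v, φ (t v) = t (φ v)) :
    φ = 0 ∨ Function.Bijective φ := by
  have hker := hT (LinearMap.ker φ) fun t ht u (hu : φ u = 0) =>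
    show φ (t u) = 0 by rw [hφ t ht, hu, map_zero]
  have hrange := hT (LinearMap.range φ) fun t ht _ ⟨v, hv⟩ => ⟨t v, by rw [← hv, hφ t ht]⟩
  rcases hker with hker | hker
  · rcases hrange with hrange | hrange
    · exact .inl (LinearMap.range_eq_bot.mp hrange)
    · exact .inr ⟨LinearMap.ker_eq_bot.mp hker, LinearMap.range_eq_top.mp hrange⟩
  · exact .inl (LinearMap.ker_eq_top.mp hker)

theorem exists_apply_ne_zero (hT₀ : ∃ t ∈ T, t ≠ 0) {y : V} (hy : y ≠ 0) : ∃ t ∈ T, t y ≠ 0 := by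
  by_contra! h
  let ann := ⨅ t : T, LinearMap.ker (t : Module.End K V)
  have hmem (v : V) : v ∈ ann ↔ ∀ t ∈ T, t v = 0 := by simp [ann]
  rcases hT ann fun t ht u hu => (hmem _).mpr fun t' ht' => by
      rw [← Module.End.mul_apply, (hmem u).mp hu _ (mul_mem ht' ht)] with hann | hann
  · exact hy ((Submodule.eq_bot_iff _).mp hann y ((hmem y).mpr h))
  · obtain ⟨t, ht, ht₀⟩ := hT₀
    exact ht₀ (LinearMap.ext fun v => (hmem v).mp (hann ▸ Submodule.mem_top) t ht)

theorem exists_mem_apply_eq (hT₀ : ∃ t ∈ T, t ≠ 0) {y : V} (hy : y ≠ 0) (w : V) :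
    ∃ t ∈ T, t y = w := by
  obtain ⟨t, ht, hty⟩ := hT.exists_apply_ne_zero hT₀ hy
  let orbit := T.toSubmodule.map (LinearMap.applyₗ y)
  have hmem (u : V) : u ∈ orbit ↔ ∃ t ∈ T, t y = u := by simp [orbit]
  rcases hT orbit fun t' ht' u hu => by
      obtain ⟨t, ht, rfl⟩ := (hmem u).mp hu
      exact (hmem _).mpr ⟨t' * t, mul_mem ht' ht, rfl⟩ with h | h
  · exact absurd ((Submodule.eq_bot_iff _).mp h _ ((hmem _).mpr ⟨t, ht, rfl⟩)) hty
  · exact (hmem w).mp (h ▸ Submodule.mem_top)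

theorem isSimpleModule_adjoin [Nontrivial V] :
    IsSimpleModule (Algebra.adjoin K (T : Set (Module.End K V))) V where
  eq_bot_or_eq_top U := by
    have := hT (U.restrictScalars K) fun t ht u hu =>
      U.smul_mem (⟨t, Algebra.subset_adjoin ht⟩ : Algebra.adjoin K (T : Set (Module.End K V))) hu
    simpa only [Submodule.restrictScalars_eq_bot_iff, Submodule.restrictScalars_eq_top_iff]
      using this

theorem exists_mem_adjoin_forall_apply_eq [Nontrivial V]
    (hcomm : ∀ φ : Module.End K V, (∀ t ∈ T, ∀ v, φ (t v) = t (φ v)) → ∃ c : K, φ = algebraMap K _ c)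
    {ι : Type*} [Fintype ι] {v : ι → V} (hv : LinearIndependent K v) (w : ι → V) :
    ∃ a ∈ Algebra.adjoin K (T : Set (Module.End K V)), ∀ i, a (v i) = w i := by
  classical
  have := hT.isSimpleModule_adjoin
  obtain ⟨g, hg⟩ := exists_linearMap_apply_eq hv w
  have hg_comm (φ : Module.End (Algebra.adjoin K (T : Set (Module.End K V))) V) (x : V) :
      g (φ x) = φ (g x) := by
    obtain ⟨c, hc⟩ := hcomm (φ.restrictScalars K) fun t ht x =>
      φ.map_smul (⟨t, Algebra.subset_adjoin ht⟩ : Algebra.adjoin K (T : Set (Module.End K V))) x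
    have hφ (y : V) : φ y = c • y := by simpa using LinearMap.congr_fun hc y
    rw [hφ, hφ, map_smul]
  let f : Module.End (Module.End (Algebra.adjoin K (T : Set (Module.End K V))) V) V :=
    { toFun := g, map_add' := g.map_add, map_smul' := hg_comm }
  obtain ⟨r, hr⟩ := jacobson_density f (Finset.univ.image v)
  exact ⟨r, r.2, fun i => (hr _ (Finset.mem_image_of_mem v (Finset.mem_univ i))).symm.trans (hg i)⟩

theorem exists_mem_forall_apply_eq (hT₀ : ∃ t ∈ T, t ≠ 0)
    (hcomm : ∀ φ : Module.End K V, (∀ t ∈ T, ∀ v, φ (t v) = t (φ v)) → ∃ c : K, φ = algebraMap K _ c)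
    {ι : Type*} [Fintype ι] [DecidableEq ι] {v : ι → V} (hv : LinearIndependent K v)
    (w : ι → V) : ∃ t ∈ T, ∀ i, t (v i) = w i := by
  have : Nontrivial V := by
    obtain ⟨t, -, ht⟩ := hT₀
    by_contra h
    rw [not_nontrivial_iff_subsingleton] at h
    exact ht (Subsingleton.elim _ _)
  choose t ht htv using fun i => hT.exists_mem_apply_eq hT₀ (hv.ne_zero i) (w i)
  choose a ha hav using fun i =>
    hT.exists_mem_adjoin_forall_apply_eq hcomm hv (fun j => if j = i then v i else 0)
  refine ⟨∑ i, t i * a i, sum_mem fun i _ => mul_mem_of_mem_adjoin (ha i) (ht i), fun j => ?_⟩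
  simp [hav, apply_ite, htv]

end ActsIrreducibly

end Irreducible

section PolynomialModule

variable {K ι : Type*} [Field K]

theorem map_polynomial_smul_of_map_X_smul {φ : Module.End K (ι → K[X])}
    (hX : ∀ v, φ ((X : K[X]) • v) = (X : K[X]) • φ v) (f : K[X]) (v : ι → K[X]) :
    φ (f • v) = f • φ v := by
  have hXpow (m : ℕ) (v : ι → K[X]) : φ ((X : K[X]) ^ m • v) = (X : K[X]) ^ m • φ v := by
    induction m generalizing v with
    | zero => simp
    | succ m ih => rw [pow_succ, mul_smul, mul_smul, ih, hX]
  induction f using Polynomial.induction_on' with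
  | add f g hf hg => rw [add_smul, map_add, hf, hg, add_smul]
  | monomial m c =>
    rw [← C_mul_X_pow_eq_monomial, mul_smul, mul_smul, ← algebraMap_eq, algebraMap_smul,
      algebraMap_smul, map_smul, hXpow]

variable [IsAlgClosed K] [Fintype ι] [DecidableEq ι] [Nonempty ι]

/-- Take `μ` an eigenvalue of `φ` at `X = 0`: an inverse of `μ - φ` over `K[X]` would give one of
its value at `0`. -/
theorem exists_not_bijective_algebraMap_sub (φ : Module.End K[X] (ι → K[X])) :
    ∃ μ : K, ¬ Function.Bijective ⇑(algebraMap K[X] (Module.End K[X] (ι → K[X])) (C μ) - φ) := by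
  let ev₀ : Matrix ι ι K[X] →+* Matrix ι ι K := (evalRingHom 0).mapMatrix
  obtain ⟨μ, hμ⟩ := IsAlgClosed.exists_root (ev₀ (LinearMap.toMatrixAlgEquiv' φ)).charpoly <| by
    simp [Matrix.charpoly_degree_eq_dim, Fintype.card_ne_zero]
  refine ⟨μ, fun hbij => ?_⟩
  have hunit := (((Module.End.isUnit_iff _).mpr hbij).map LinearMap.toMatrixAlgEquiv').map ev₀
  have hscalar : ev₀ (algebraMap K[X] (Matrix ι ι K[X]) (C μ)) = Matrix.scalar ι μ := by
    ext i j
    by_cases hij : i = j <;> simp [ev₀, hij, Matrix.algebraMap_matrix_apply]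
  rw [map_sub, map_sub, AlgEquiv.commutes, hscalar, Matrix.isUnit_iff_isUnit_det,
    ← Matrix.eval_charpoly, hμ.eq_zero] at hunit
  exact not_isUnit_zero hunit

theorem ActsIrreducibly.eq_algebraMap_of_commute
    {T : NonUnitalSubalgebra K (Module.End K (ι → K[X]))} (hT : ActsIrreducibly T)
    {φ : Module.End K (ι → K[X])} (hφ : ∀ t ∈ T, ∀ v, φ (t v) = t (φ v))
    (hX : ∀ v, φ ((X : K[X]) • v) = (X : K[X]) • φ v) : ∃ c : K, φ = algebraMap K _ c := by
  let Φ : Module.End K[X] (ι → K[X]) :=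
    { φ with map_smul' := map_polynomial_smul_of_map_X_smul hX }
  obtain ⟨μ, hμ⟩ := exists_not_bijective_algebraMap_sub Φ
  refine ⟨μ, (sub_eq_zero.mp ?_).symm⟩
  refine (hT.eq_zero_or_bijective fun t ht v => ?_).resolve_right fun hbij => hμ ?_
  · simp [hφ t ht]
  · convert hbij using 1
    funext v
    simp only [LinearMap.sub_apply, Module.algebraMap_end_apply]
    exact congrArg (· - φ v) (algebraMap_smul K[X] μ v)

end PolynomialModule

section WeylAlgebra

variable {k : Type*} [Field k]

theorem coe_polyP (f : k[X]) :
    ((polyP k f : WeylA k) : Module.End k k[X]) = LinearMap.mulLeft k f := by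
  change (WeylA k).val (aeval (pW k) f) = _
  rw [← aeval_algHom_apply, show (WeylA k).val (pW k) = Algebra.lmul k k[X] X from rfl,
    aeval_algHom_apply, aeval_X_left_apply]
  rfl

theorem coe_qW : ((qW k : WeylA k) : Module.End k k[X]) = derivative := rfl

theorem pW_mul_polyP (f : k[X]) : pW k * polyP k f = polyP k (X * f) := by
  rw [map_mul, polyP, aeval_X]

theorem qW_mul_polyP (f : k[X]) :
    qW k * polyP k f = polyP k f * qW k + polyP k (derivative f) := by
  refine Subtype.ext (LinearMap.ext fun g => ?_)
  change derivative (((polyP k f : WeylA k) : Module.End k k[X]) g) = _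
  simp only [Subalgebra.coe_add, MulMemClass.coe_mul, LinearMap.add_apply, Module.End.mul_apply,
    coe_polyP, coe_qW, LinearMap.mulLeft_apply, derivative_mul]
  ring

theorem exists_eq_polyP_add_mul_qW (w : WeylA k) : ∃ f u, w = polyP k f + u * qW k := by
  suffices h : ∀ x : WeylA k, (∃ f u, x = polyP k f + u * qW k) →
      ∃ f u, w * x = polyP k f + u * qW k by
    simpa using h 1 ⟨1, 0, by simp⟩
  obtain ⟨w, hw⟩ := w
  induction hw using Algebra.adjoin_induction with
  | mem w hw =>
    rintro _ ⟨f, u, rfl⟩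
    rcases hw with rfl | rfl
    · refine ⟨X * f, pW k * u, ?_⟩
      rw [show (⟨pOp k, _⟩ : WeylA k) = pW k from rfl, mul_add, pW_mul_polyP, mul_assoc]
    · refine ⟨derivative f, polyP k f + qW k * u, ?_⟩
      rw [show (⟨qOp k, _⟩ : WeylA k) = qW k from rfl, mul_add, qW_mul_polyP, add_mul, mul_assoc]
      abel
  | algebraMap r =>
    rintro _ ⟨f, u, rfl⟩
    refine ⟨C r * f, algebraMap k _ r * u, ?_⟩
    change algebraMap k (WeylA k) r * _ = _
    rw [← (polyP k).commutes r, mul_add, ← map_mul, ← mul_assoc, (polyP k).commutes r]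
    rfl
  | add w₁ w₂ _ _ h₁ h₂ =>
    rintro x hx
    obtain ⟨f₁, u₁, h₁⟩ := h₁ x hx
    obtain ⟨f₂, u₂, h₂⟩ := h₂ x hx
    refine ⟨f₁ + f₂, u₁ + u₂, ?_⟩
    rw [show (⟨w₁ + w₂, _⟩ : WeylA k) = ⟨w₁, ‹_›⟩ + ⟨w₂, ‹_›⟩ from rfl, add_mul, h₁, h₂, map_add,
      add_mul]
    abel
  | mul w₁ w₂ _ _ h₁ h₂ =>
    rintro x hx
    rw [show (⟨w₁ * w₂, _⟩ : WeylA k) = ⟨w₁, ‹_›⟩ * ⟨w₂, ‹_›⟩ from rfl, mul_assoc]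
    exact h₁ _ (h₂ x hx)

theorem exists_eq_mul_qW_pow [CharZero k] (n : ℕ) (w : WeylA k)
    (hw : ∀ m < n, (w : Module.End k k[X]) (X ^ m) = 0) : ∃ u, w = u * qW k ^ n := by
  induction n generalizing w with
  | zero => exact ⟨w, by simp⟩
  | succ n ih =>
    obtain ⟨f, u, rfl⟩ := exists_eq_polyP_add_mul_qW w
    have hf : f = 0 := by simpa [coe_polyP, coe_qW] using hw 0 n.succ_pos
    subst hf
    obtain ⟨u', rfl⟩ := ih u fun m hm => by
      have := hw (m + 1) (by omega)
      simp only [map_zero, zero_add, Subalgebra.coe_mul, Module.End.mul_apply, coe_qW] at this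
      rw [derivative_X_pow, Nat.add_sub_cancel, ← smul_eq_C_mul, map_smul] at this
      exact (smul_eq_zero.mp this).resolve_left (Nat.cast_ne_zero.mpr m.succ_ne_zero)
    exact ⟨u', by rw [map_zero, zero_add, pow_succ, mul_assoc]⟩

end WeylAlgebra

section Representation

variable {k : Type*} [Field k] {N : ℕ}

variable (k N) in
def actHom : MW k N →ₐ[k] Module.End k (Fin N → k[X]) :=
  (endVecAlgEquivMatrixEnd (Fin N) k k k[X]).symm.toAlgHom.comp (WeylA k).val.mapMatrix

theorem actHom_apply (a : MW k N) (v : Fin N → k[X]) : actHom k N a v = act k N a v := rfl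

theorem actHom_pM_mul (a : MW k N) (v : Fin N → k[X]) :
    actHom k N (pM k N * a) v = (X : k[X]) • actHom k N a v := by
  rw [map_mul, Module.End.mul_apply]
  funext i
  simp only [actHom_apply, act, pM, Matrix.diagonal_apply, apply_ite (Subtype.val),
    apply_ite DFunLike.coe, ZeroMemClass.coe_zero, LinearMap.zero_apply, ite_apply,
    Finset.sum_ite_eq, Finset.mem_univ, if_true, Pi.smul_apply, smul_eq_mul]
  rfl

theorem act_single (a : MW k N) (j : Fin N) (f : k[X]) (i : Fin N) :
    act k N a (Pi.single j f) i = (a i j : Module.End k k[X]) f := by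
  simp [act, Pi.single_apply, apply_ite]

theorem linearIndependent_single_X_pow (n : ℕ) :
    LinearIndependent k fun jm : Σ _ : Fin N, Fin n =>
      (Pi.single jm.1 (X ^ (jm.2 : ℕ)) : Fin N → k[X]) := by
  have hX : LinearIndependent k fun m : Fin n => (X ^ (m : ℕ) : k[X]) := by
    convert (basisMonomials k).linearIndependent.comp _ Fin.val_injective using 1
    funext m
    simp [coe_basisMonomials, X_pow_eq_monomial]
  exact Pi.linearIndependent_single (fun _ (m : Fin n) => (X ^ (m : ℕ) : k[X])) fun _ => hX

theorem exists_eq_mul_qM_pow [CharZero k] (n : ℕ) (a : MW k N)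
    (ha : ∀ j, ∀ m < n, act k N a (Pi.single j (X ^ m)) = 0) : ∃ y, a = y * qM k N ^ n := by
  choose u hu using fun i j => exists_eq_mul_qW_pow n (a i j) fun m hm => by
    simpa [act_single] using congrFun (ha j m hm) i
  exact ⟨Matrix.of u, by ext1 i j; rw [qM, Matrix.diagonal_pow, Matrix.mul_diagonal]; exact hu i j⟩

variable {S : NonUnitalSubalgebra k (MW k N)}

theorem actsIrreducibly_map_actHom
    (hirr : ∀ U : Submodule k (Fin N → k[X]),
      (∀ a ∈ S, ∀ u ∈ U, act k N a u ∈ U) → U = ⊥ ∨ U = ⊤) :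
    ActsIrreducibly (S.map (actHom k N)) := fun U hU =>
  hirr U fun a ha => hU _ (NonUnitalSubalgebra.mem_map.mpr ⟨a, ha, rfl⟩)

theorem exists_ne_zero_mem_map_actHom (hN : 0 < N) (hT : ActsIrreducibly (S.map (actHom k N))) :
    ∃ t ∈ S.map (actHom k N), t ≠ 0 := by
  let i₀ : Fin N := ⟨0, hN⟩
  refine hT.exists_ne_zero (U := LinearMap.ker ((lcoeff k 0).comp (LinearMap.proj i₀))) ?_ ?_
  · exact (Submodule.ne_bot_iff _).mpr ⟨Pi.single i₀ X, by simp, by simp⟩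
  · exact fun h => by simpa [i₀] using Submodule.eq_top_iff'.mp h (Pi.single i₀ 1)

theorem map_X_smul_of_commute (hN : 0 < N) (hpS : ∀ a ∈ S, pM k N * a ∈ S)
    (hT : ActsIrreducibly (S.map (actHom k N))) (hT₀ : ∃ t ∈ S.map (actHom k N), t ≠ 0)
    {φ : Module.End k (Fin N → k[X])} (hφ : ∀ t ∈ S.map (actHom k N), ∀ v, φ (t v) = t (φ v))
    (v : Fin N → k[X]) : φ ((X : k[X]) • v) = (X : k[X]) • φ v := by
  have hmem (a : MW k N) (ha : a ∈ S) : actHom k N a ∈ S.map (actHom k N) :=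
    NonUnitalSubalgebra.mem_map.mpr ⟨a, ha, rfl⟩
  have hy : (Pi.single ⟨0, hN⟩ 1 : Fin N → k[X]) ≠ 0 := by simp
  obtain ⟨t, ht, rfl⟩ := hT.exists_mem_apply_eq hT₀ hy v
  obtain ⟨s, hs, rfl⟩ := NonUnitalSubalgebra.mem_map.mp ht
  rw [← actHom_pM_mul, hφ _ (hmem _ (hpS s hs)), actHom_pM_mul, hφ _ (hmem s hs)]

end Representation

end WeylDensity

open WeylDensity

theorem density_of_irreducible [IsAlgClosed k] (N : ℕ) (hN : 0 < N)
    (S : NonUnitalSubalgebra k (MW k N))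
    (hpS : ∀ a ∈ S, pM k N * a ∈ S)
    (hirr : ∀ U : Submodule k (Fin N → Polynomial k),
      (∀ a ∈ S, ∀ u ∈ U, act k N a u ∈ U) → U = ⊥ ∨ U = ⊤) :
    ∀ (x : MW k N) (n : ℕ), ∃ s ∈ S, ∃ y : MW k N, x - s = y * qM k N ^ n := by
  intro x n
  have : Nonempty (Fin N) := ⟨⟨0, hN⟩⟩
  have hT := actsIrreducibly_map_actHom hirr
  have hT₀ := exists_ne_zero_mem_map_actHom hN hT
  obtain ⟨t, ht, hsx⟩ := hT.exists_mem_forall_apply_eq hT₀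
    (fun _ hφ => hT.eq_algebraMap_of_commute hφ (map_X_smul_of_commute hN hpS hT hT₀ hφ))
    (linearIndependent_single_X_pow n) fun jm => actHom k N x (Pi.single jm.1 (X ^ (jm.2 : ℕ)))
  obtain ⟨s, hs, rfl⟩ := NonUnitalSubalgebra.mem_map.mp ht
  obtain ⟨y, hy⟩ := exists_eq_mul_qM_pow n (x - s) fun j m hm => by
    have hsub : actHom k N (x - s) = actHom k N x - actHom k N s := (actHom k N).map_sub x s
    rw [← actHom_apply, hsub, LinearMap.sub_apply, hsx ⟨j, ⟨m, hm⟩⟩, sub_self]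
  exact ⟨s, hs, y, hy⟩

end
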